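/- Fix n ≥ 5 and let D = ℤ_{≥1} ∪ {3/2 + (2n−6)z : z ∈ ℤ_{≥0}} ∪ {n − 3/2 + (2n−6)z : z ∈ ℤ_{≥0}}, a subset of the half-integers. Let π : D → {1,…,n} be the map of period 2n−6 determined by π(1) = 1, π(3/2) = 2, π(ℓ) = ℓ+1 for 2 ≤ ℓ ≤ n−2, π(n − 3/2) = n, and π(2n−3−ℓ) = ℓ for 3 ≤ ℓ ≤ n−2. Let p assign to each ordered pair (i,j) of adjacent vertices of the Dynkin diagram of D^{(1)}_{n−1} (the pairs {1,3}, {2,3}, {i,i+1} for 3 ≤ i ≤ n−3, {n−2,n−1} and {n−2,n}) a value p_{i,j} ∈ {0,1} with p_{i,j} + p_{j,i} = 1. For ℓ ∈ D define P_ℓ : D → ℤ by: P_ℓ(t) = 0 if t ≤ ℓ and {ℓ,t} is neither {1, 3/2} nor {n−2, n−3/2}; P_{j₁}(j₂) = p_{3,π(j₁)} − p_{3,π(j₂)} if {j₁,j₂} = {1, 3/2}; P_{j₁}(j₂) = p_{n−2,π(j₁)} − p_{n−2,π(j₂)} if {j₁,j₂} = {n−2, n−3/2}; and, for t ∈ D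 with t > ℓ and {ℓ,t} neither {1, 3/2} nor {n−2, n−3/2}, P_ℓ(t) = P_ℓ(t − 3/2) + p_{2,3} if π(t) = 2, P_ℓ(t) = P_ℓ(t − 3/2) + p_{n,n−2} if π(t) = n, and P_ℓ(t) = P_ℓ(t − 1) + p_{π(t),π(t−1)} otherwise. Then P_ℓ(t) ≥ 0 for all ℓ, t ∈ D such that {ℓ,t} is neither {1, 3/2} nor {n−2, n−3/2}, and P_ℓ(t) ≥ −1 in the two exceptional cases. -/
import Mathlib


noncomputable section

/-- The domain
`D = ℤ_{≥1} ∪ {3/2 + (2n−6)z : z ∈ ℤ_{≥0}} ∪ {n − 3/2 + (2n−6)z : z ∈ ℤ_{≥0}}`,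
as a set of rationals. -/
def Dom (n : ℕ) : Set ℚ :=
  {t | (∃ m : ℕ, 1 ≤ m ∧ t = m) ∨ (∃ z : ℕ, t = 3 / 2 + (2 * (n : ℚ) - 6) * z) ∨
    ∃ z : ℕ, t = (n : ℚ) - 3 / 2 + (2 * (n : ℚ) - 6) * z}

/-- Adjacency in the Dynkin diagram of type `D^{(1)}_{n-1}`: the pairs `{1,3}`, `{2,3}`,
`{i,i+1}` for `3 ≤ i ≤ n−3`, `{n−2,n−1}` and `{n−2,n}`. -/
def AdjD (n i j : ℕ) : Prop :=
  (i = 1 ∧ j = 3) ∨ (i = 3 ∧ j = 1) ∨ (i = 2 ∧ j = 3) ∨ (i = 3 ∧ j = 2) ∨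
  (∃ m, 3 ≤ m ∧ m + 3 ≤ n ∧ ((i = m ∧ j = m + 1) ∨ (i = m + 1 ∧ j = m))) ∨
  (i = n - 2 ∧ j = n - 1) ∨ (i = n - 1 ∧ j = n - 2) ∨
  (i = n - 2 ∧ j = n) ∨ (i = n ∧ j = n - 2)

/-- The exceptional pair `{ℓ,t} = {1, 3/2}`. -/
def ExcPairA (ℓ t : ℚ) : Prop := (ℓ = 1 ∧ t = 3 / 2) ∨ (ℓ = 3 / 2 ∧ t = 1)

/-- The exceptional pair `{ℓ,t} = {n−2, n−3/2}`. -/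
def ExcPairB (n : ℕ) (ℓ t : ℚ) : Prop :=
  (ℓ = (n : ℚ) - 2 ∧ t = (n : ℚ) - 3 / 2) ∨ (ℓ = (n : ℚ) - 3 / 2 ∧ t = (n : ℚ) - 2)

/-- Auxiliary: the intended value of `π` on the integer residue `r ∈ [1, 2n-6]`. -/
private def gD (n r : ℕ) : ℕ :=
  if r = 1 then 1 else if r ≤ n - 2 then r + 1 else 2 * n - 3 - r

private lemma gD_one (n : ℕ) : gD n 1 = 1 := by simp [gD]

private lemma gD_mid (n r : ℕ) (h1 : 2 ≤ r) (h2 : r ≤ n - 2) : gD n r = r + 1 := by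
  simp only [gD]; rw [if_neg (by omega), if_pos h2]

private lemma gD_high (n r : ℕ) (hn : 5 ≤ n) (h1 : n - 1 ≤ r) : gD n r = 2 * n - 3 - r := by
  simp only [gD]; rw [if_neg (by omega), if_neg (by omega)]

private lemma gD_ne (n r : ℕ) (hn : 5 ≤ n) (h1 : 1 ≤ r) (h2 : r ≤ 2 * n - 6) :
    gD n r ≠ 2 ∧ gD n r ≠ n := by
  simp only [gD]; split_ifs <;> omega

private lemma gD_adj (n r : ℕ) (hn : 5 ≤ n) (h1 : 1 ≤ r) (h2 : r ≤ 2 * n - 6) :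
    AdjD n (gD n (r % (2 * n - 6) + 1)) (gD n r) := by
  rcases eq_or_ne r (2 * n - 6) with rfl | hne
  · rw [Nat.mod_self, gD_one, gD_high n _ hn (by omega)]
    have h3 : 2 * n - 3 - (2 * n - 6) = 3 := by omega
    rw [h3]; exact Or.inl ⟨rfl, rfl⟩
  · rw [Nat.mod_eq_of_lt (by omega)]
    rcases eq_or_ne r 1 with rfl | hr1
    · rw [gD_mid n 2 le_rfl (by omega), gD_one]
      exact Or.inr (Or.inl ⟨rfl, rfl⟩)
    · rcases le_or_gt r (n - 4) with hr4 | hr4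
      · rw [gD_mid n (r + 1) (by omega) (by omega), gD_mid n r (by omega) (by omega)]
        exact Or.inr (Or.inr (Or.inr (Or.inr (Or.inl
          ⟨r + 1, by omega, by omega, Or.inr ⟨rfl, rfl⟩⟩))))
      · rcases eq_or_ne r (n - 3) with rfl | hr3
        · rw [gD_mid n (n - 3 + 1) (by omega) (by omega), gD_mid n (n - 3) (by omega) (by omega)]
          exact Or.inr (Or.inr (Or.inr (Or.inr (Or.inr (Or.inr (Or.inl ⟨by omega, by omega⟩))))))
        · rcases eq_or_ne r (n - 2) with rfl | hr2
          · rw [gD_high n (n - 2 + 1) hn (by omega), gD_mid n (n - 2) (by omega) (by omega)]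
            exact Or.inr (Or.inr (Or.inr (Or.inr (Or.inr (Or.inl ⟨by omega, by omega⟩)))))
          · rw [gD_high n (r + 1) hn (by omega), gD_high n r hn (by omega)]
            exact Or.inr (Or.inr (Or.inr (Or.inr (Or.inl
              ⟨2 * n - 3 - (r + 1), by omega, by omega, Or.inl ⟨rfl, by omega⟩⟩))))

private lemma dom_nat' (n : ℕ) (m : ℕ) (hm : 1 ≤ m) : (m : ℚ) ∈ Dom n :=
  Or.inl ⟨m, hm, rfl⟩

private lemma castDelta (n : ℕ) (hn : 5 ≤ n) : ((2 * n - 6 : ℕ) : ℚ) = 2 * (n : ℚ) - 6 := by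
  rw [Nat.cast_sub (by omega)]; push_cast; ring

section PiFacts
variable (n : ℕ) (hn : 5 ≤ n) (π : ℚ → ℕ)
  (hπper : ∀ t ∈ Dom n, π (t + (2 * (n : ℚ) - 6)) = π t)
  (hπ1 : π 1 = 1) (hπ32 : π (3 / 2) = 2)
  (hπmid : ∀ ℓ : ℕ, 2 ≤ ℓ → ℓ + 2 ≤ n → π (ℓ : ℚ) = ℓ + 1)
  (hπn : π ((n : ℚ) - 3 / 2) = n)
  (hπback : ∀ ℓ : ℕ, 3 ≤ ℓ → ℓ + 2 ≤ n → π (2 * (n : ℚ) - 3 - (ℓ : ℚ)) = ℓ)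

include hπper hπ32 in
private lemma pi_half2 : ∀ k : ℕ, π (3 / 2 + (2 * (n : ℚ) - 6) * k) = 2 := by
  intro k
  induction k with
  | zero => simpa using hπ32
  | succ k ih =>
    have harg : (3 / 2 + (2 * (n : ℚ) - 6) * ((k + 1 : ℕ) : ℚ))
        = (3 / 2 + (2 * (n : ℚ) - 6) * k) + (2 * (n : ℚ) - 6) := by push_cast; ring
    rw [harg, hπper _ (Or.inr (Or.inl ⟨k, rfl⟩)), ih]

include hπper hπn in
private lemma pi_halfn : ∀ k : ℕ, π ((n : ℚ) - 3 / 2 + (2 * (n : ℚ) - 6) * k) = n := by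
  intro k
  induction k with
  | zero => simpa using hπn
  | succ k ih =>
    have harg : ((n : ℚ) - 3 / 2 + (2 * (n : ℚ) - 6) * ((k + 1 : ℕ) : ℚ))
        = ((n : ℚ) - 3 / 2 + (2 * (n : ℚ) - 6) * k) + (2 * (n : ℚ) - 6) := by push_cast; ring
    rw [harg, hπper _ (Or.inr (Or.inr ⟨k, rfl⟩)), ih]

include hn hπ1 hπmid hπback in
private lemma pi_base : ∀ r : ℕ, 1 ≤ r → r ≤ 2 * n - 6 → π r = gD n r := by
  intro r h1 h2
  rcases eq_or_ne r 1 with rfl | hne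
  · simpa [gD] using hπ1
  · rcases le_or_gt r (n - 2) with hle | hgt
    · have := hπmid r (by omega) (by omega)
      simp only [gD]
      rw [if_neg hne, if_pos hle]
      exact this
    · have h3 : 3 ≤ 2 * n - 3 - r := by omega
      have h4 : (2 * n - 3 - r) + 2 ≤ n := by omega
      have hb := hπback (2 * n - 3 - r) h3 h4
      have hc : (2 * (n : ℚ) - 3 - ((2 * n - 3 - r : ℕ) : ℚ)) = (r : ℚ) := by
        have h5 : (2 * n - 3 - r) + r = 2 * n - 3 := by omega
        have h6 := congrArg (fun x : ℕ => (x : ℚ)) h5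
        push_cast [Nat.cast_sub (show 3 ≤ 2 * n by omega)] at h6
        linarith
      rw [hc] at hb
      rw [hb]
      simp only [gD]
      rw [if_neg hne, if_neg (by omega)]

include hn hπper hπ1 hπmid hπback in
private lemma pi_val : ∀ m : ℕ, 1 ≤ m → π m = gD n ((m - 1) % (2 * n - 6) + 1) := by
  intro m
  induction m using Nat.strong_induction_on with
  | _ m IH =>
    intro hm
    rcases le_or_gt m (2 * n - 6) with hle | hgt
    · rw [Nat.mod_eq_of_lt (by omega), show m - 1 + 1 = m by omega]
      exact pi_base n hn π hπ1 hπmid hπback m hm hle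
    · have hm' : 1 ≤ m - (2 * n - 6) := by omega
      have harg : (m : ℚ) = ((m - (2 * n - 6) : ℕ) : ℚ) + (2 * (n : ℚ) - 6) := by
        have h5 : (m - (2 * n - 6)) + (2 * n - 6) = m := by omega
        have h6 := congrArg (fun x : ℕ => (x : ℚ)) h5
        push_cast [castDelta n hn] at h6
        linarith
      rw [harg, hπper _ (dom_nat' n _ hm'), IH _ (by omega) hm']
      congr 2
      rw [show m - 1 = (m - (2 * n - 6) - 1) + (2 * n - 6) by omega, Nat.add_mod_right]

end PiFacts

theorem P_nonneg_D1 (n : ℕ) (hn : 5 ≤ n)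
    (π : ℚ → ℕ) (p : ℕ → ℕ → ℤ) (P : ℚ → ℚ → ℤ)
    -- π is the map of period 2n−6 determined by the prescribed values:
    (hπper : ∀ t ∈ Dom n, π (t + (2 * (n : ℚ) - 6)) = π t)
    (hπ1 : π 1 = 1) (hπ32 : π (3 / 2) = 2)
    (hπmid : ∀ ℓ : ℕ, 2 ≤ ℓ → ℓ + 2 ≤ n → π (ℓ : ℚ) = ℓ + 1)
    (hπn : π ((n : ℚ) - 3 / 2) = n)
    (hπback : ∀ ℓ : ℕ, 3 ≤ ℓ → ℓ + 2 ≤ n → π (2 * (n : ℚ) - 3 - (ℓ : ℚ)) = ℓ)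
    -- p takes values in {0,1} on adjacent pairs, with p_{i,j} + p_{j,i} = 1:
    (hp : ∀ i j, AdjD n i j → (p i j = 0 ∨ p i j = 1) ∧ p i j + p j i = 1)
    -- the defining recursion for P_ℓ:
    (hP0 : ∀ ℓ ∈ Dom n, ∀ t ∈ Dom n, t ≤ ℓ → ¬ExcPairA ℓ t → ¬ExcPairB n ℓ t →
      P ℓ t = 0)
    (hPexcA : ∀ ℓ ∈ Dom n, ∀ t ∈ Dom n, ExcPairA ℓ t →
      P ℓ t = p 3 (π ℓ) - p 3 (π t))
    (hPexcB : ∀ ℓ ∈ Dom n, ∀ t ∈ Dom n, ExcPairB n ℓ t →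
      P ℓ t = p (n - 2) (π ℓ) - p (n - 2) (π t))
    (hPrec2 : ∀ ℓ ∈ Dom n, ∀ t ∈ Dom n, ℓ < t → ¬ExcPairA ℓ t → ¬ExcPairB n ℓ t →
      π t = 2 → P ℓ t = P ℓ (t - 3 / 2) + p 2 3)
    (hPrecn : ∀ ℓ ∈ Dom n, ∀ t ∈ Dom n, ℓ < t → ¬ExcPairA ℓ t → ¬ExcPairB n ℓ t →
      π t = n → P ℓ t = P ℓ (t - 3 / 2) + p n (n - 2))
    (hPrec : ∀ ℓ ∈ Dom n, ∀ t ∈ Dom n, ℓ < t → ¬ExcPairA ℓ t → ¬ExcPairB n ℓ t →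
      π t ≠ 2 → π t ≠ n → P ℓ t = P ℓ (t - 1) + p (π t) (π (t - 1))) :
    ∀ ℓ ∈ Dom n, ∀ t ∈ Dom n,
      (¬ExcPairA ℓ t → ¬ExcPairB n ℓ t → 0 ≤ P ℓ t) ∧
      ((ExcPairA ℓ t ∨ ExcPairB n ℓ t) → -1 ≤ P ℓ t) := by
  have hnQ : (5 : ℚ) ≤ (n : ℚ) := by exact_mod_cast hn
  have domNat : ∀ m : ℕ, 1 ≤ m → (m : ℚ) ∈ Dom n := fun m hm => Or.inl ⟨m, hm, rfl⟩
  have domGe1 : ∀ s ∈ Dom n, (1 : ℚ) ≤ s := by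
    rintro s (⟨m, hm, rfl⟩ | ⟨z, rfl⟩ | ⟨z, rfl⟩)
    · exact_mod_cast hm
    · have hz : (0 : ℚ) ≤ (z : ℚ) := Nat.cast_nonneg z
      nlinarith
    · have hz : (0 : ℚ) ≤ (z : ℚ) := Nat.cast_nonneg z
      nlinarith
  have hg2 := pi_half2 n π hπper hπ32
  have hgn := pi_halfn n π hπper hπn
  have hval := pi_val n hn π hπper hπ1 hπmid hπback
  have pi_ne : ∀ m : ℕ, 1 ≤ m → π m ≠ 2 ∧ π m ≠ n := by
    intro m hm
    rw [hval m hm]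
    have := Nat.mod_lt (m - 1) (show 0 < 2 * n - 6 by omega)
    exact gD_ne n _ hn (by omega) (by omega)
  have pi_adj : ∀ m : ℕ, 2 ≤ m → AdjD n (π m) (π ((m : ℚ) - 1)) := by
    intro m hm
    have hcast : ((m - 1 : ℕ) : ℚ) = (m : ℚ) - 1 := by
      rw [Nat.cast_sub (by omega)]; norm_num
    have e1 := hval m (by omega)
    have e2 := hval (m - 1) (by omega)
    rw [hcast] at e2
    rw [e1, e2]
    have hmlt := Nat.mod_lt (m - 1 - 1) (show 0 < 2 * n - 6 by omega)
    have hkey : (m - 1) % (2 * n - 6) = ((m - 1 - 1) % (2 * n - 6) + 1) % (2 * n - 6) := by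
      conv_lhs => rw [show m - 1 = (m - 1 - 1) + 1 by omega]
      rw [Nat.add_mod, Nat.mod_eq_of_lt (show 1 < 2 * n - 6 by omega)]
    rw [hkey]
    exact gD_adj n _ hn (by omega) (by omega)
  have pge : ∀ i j, AdjD n i j → 0 ≤ p i j := by
    intro i j h; rcases (hp i j h).1 with h0 | h0 <;> omega
  have ple : ∀ i j, AdjD n i j → p i j ≤ 1 := by
    intro i j h; rcases (hp i j h).1 with h0 | h0 <;> omega
  have adj13 : AdjD n 1 3 := Or.inl ⟨rfl, rfl⟩
  have adj31 : AdjD n 3 1 := Or.inr (Or.inl ⟨rfl, rfl⟩)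
  have adj23 : AdjD n 2 3 := Or.inr (Or.inr (Or.inl ⟨rfl, rfl⟩))
  have adj32 : AdjD n 3 2 := Or.inr (Or.inr (Or.inr (Or.inl ⟨rfl, rfl⟩)))
  have adjn2n1 : AdjD n (n - 2) (n - 1) :=
    Or.inr (Or.inr (Or.inr (Or.inr (Or.inr (Or.inl ⟨rfl, rfl⟩)))))
  have adjn2n : AdjD n (n - 2) n :=
    Or.inr (Or.inr (Or.inr (Or.inr (Or.inr (Or.inr (Or.inr (Or.inl ⟨rfl, rfl⟩)))))))
  have adjnn2 : AdjD n n (n - 2) :=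
    Or.inr (Or.inr (Or.inr (Or.inr (Or.inr (Or.inr (Or.inr (Or.inr ⟨rfl, rfl⟩)))))))
  have hcast_n2 : ((n - 2 : ℕ) : ℚ) = (n : ℚ) - 2 := by
    rw [Nat.cast_sub (by omega)]; norm_num
  have hπn2 : π ((n : ℚ) - 2) = n - 1 := by
    have h := hπmid (n - 2) (by omega) (by omega)
    rw [hcast_n2] at h
    rw [h]; omega
  have hπn1 : π ((n : ℚ) - 1) = n - 2 := by
    have h := hπback (n - 2) (by omega) (by omega)
    have harg : 2 * (n : ℚ) - 3 - ((n - 2 : ℕ) : ℚ) = (n : ℚ) - 1 := by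
      rw [hcast_n2]; ring
    rwa [harg] at h
  have natNe32 : ∀ m : ℕ, (m : ℚ) ≠ 3 / 2 := by
    intro m h
    have h2 : (2 * m : ℕ) = (3 : ℕ) := by
      have : ((2 * m : ℕ) : ℚ) = 3 := by push_cast; linarith
      exact_mod_cast this
    omega
  have natNeN32 : ∀ m : ℕ, (m : ℚ) ≠ (n : ℚ) - 3 / 2 := by
    intro m h
    have h2 : (2 * m + 3 : ℕ) = (2 * n : ℕ) := by
      have : ((2 * m + 3 : ℕ) : ℚ) = ((2 * n : ℕ) : ℚ) := by push_cast; linarith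
      exact_mod_cast this
    omega
  -- MAIN INDUCTION
  have key : ∀ N : ℕ, ∀ ℓ ∈ Dom n, ∀ t ∈ Dom n, t ≤ (N : ℚ) →
      ¬ExcPairA ℓ t → ¬ExcPairB n ℓ t → 0 ≤ P ℓ t := by
    intro N
    induction N with
    | zero =>
      intro ℓ hℓ t ht hle hA hB
      have := domGe1 t ht
      norm_num at hle
      linarith
    | succ N IH =>
      intro ℓ hℓ t ht hle hA hB
      rcases le_or_gt t ℓ with hc | hlt
      · rw [hP0 ℓ hℓ t ht hc hA hB]
      · rcases ht with ⟨m, hm, rfl⟩ | ⟨k, rfl⟩ | ⟨k, rfl⟩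
        · -- t is a positive integer m
          have hm2 : 2 ≤ m := by
            have h1 : (1 : ℚ) < (m : ℚ) := lt_of_le_of_lt (domGe1 ℓ hℓ) hlt
            exact_mod_cast h1
          obtain ⟨hne2, hnen⟩ := pi_ne m (by omega)
          have hrec := hPrec ℓ hℓ _ (domNat m hm) hlt hA hB hne2 hnen
          have hcast : ((m - 1 : ℕ) : ℚ) = (m : ℚ) - 1 := by
            rw [Nat.cast_sub (by omega)]; norm_num
          have hmem' : ((m : ℚ) - 1) ∈ Dom n := hcast ▸ domNat (m - 1) (by omega)
          have hpge := pge _ _ (pi_adj m hm2)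
          rw [hrec]
          by_cases hA' : ExcPairA ℓ ((m : ℚ) - 1)
          · rcases hA' with ⟨h1, h2⟩ | ⟨h1, h2⟩
            · exfalso
              have h3 : (2 * m : ℕ) = (5 : ℕ) := by
                have : ((2 * m : ℕ) : ℚ) = 5 := by push_cast; linarith
                exact_mod_cast this
              omega
            · have hm2' : m = 2 := by
                have : (m : ℚ) = 2 := by linarith
                exact_mod_cast this
              subst hm2'
              rw [hPexcA ℓ hℓ _ hmem' (Or.inr ⟨h1, h2⟩), h1, h2, hπ32, hπ1]
              have hπ2 : π ((2 : ℕ) : ℚ) = 3 := by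
                have := hπmid 2 le_rfl (by omega)
                simpa using this
              rw [show ((2 : ℕ) : ℚ) = (2 : ℚ) by norm_num] at hπ2 ⊢
              rw [hπ2]
              have := pge 3 2 adj32
              linarith
          · by_cases hB' : ExcPairB n ℓ ((m : ℚ) - 1)
            · rcases hB' with ⟨h1, h2⟩ | ⟨h1, h2⟩
              · exfalso
                have h3 : (2 * m + 1 : ℕ) = (2 * n : ℕ) := by
                  have : ((2 * m + 1 : ℕ) : ℚ) = ((2 * n : ℕ) : ℚ) := by push_cast; linarith
                  exact_mod_cast this
                omega
              · have hmn : (m : ℚ) = (n : ℚ) - 1 := by linarith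
                rw [hPexcB ℓ hℓ _ hmem' (Or.inr ⟨h1, h2⟩), h1, hπn, h2, hπn2, hmn, hπn1]
                have := pge (n - 2) n adjn2n
                linarith
            · have hle' : (m : ℚ) - 1 ≤ (N : ℚ) := by
                push_cast at hle; linarith
              have h0 := IH ℓ hℓ _ hmem' hle' hA' hB'
              linarith
        · -- t = 3/2 + (2n-6) k
          have hπt := hg2 k
          rcases Nat.eq_zero_or_pos k with rfl | hk
          · exfalso
            apply hA
            have hℓ1 : ℓ = 1 := by
              simp only [Nat.cast_zero, mul_zero, add_zero] at hlt
              rcases hℓ with ⟨m', hm', rfl⟩ | ⟨z, rfl⟩ | ⟨z, rfl⟩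
              · have h1 : (m' : ℚ) < 3 / 2 := hlt
                have h2 : m' = 1 := by
                  by_contra hcon
                  have h3 : 2 ≤ m' := by omega
                  have h4 : (2 : ℚ) ≤ (m' : ℚ) := by exact_mod_cast h3
                  linarith
                rw [h2]; norm_num
              · exfalso
                have hz : (0 : ℚ) ≤ (z : ℚ) := Nat.cast_nonneg z
                nlinarith
              · exfalso
                have hz : (0 : ℚ) ≤ (z : ℚ) := Nat.cast_nonneg z
                nlinarith
            exact Or.inl ⟨hℓ1, by norm_num⟩
          · set K := (2 * n - 6) * k with hK
            have hKge : 2 * n - 6 ≤ K := Nat.le_mul_of_pos_right _ hk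
            have hcastK : ((K : ℕ) : ℚ) = (2 * (n : ℚ) - 6) * (k : ℚ) := by
              rw [hK, Nat.cast_mul, castDelta n hn]
            have harg : 3 / 2 + (2 * (n : ℚ) - 6) * (k : ℚ) - 3 / 2 = (K : ℚ) := by
              rw [hcastK]; ring
            have hmem' : ((K : ℕ) : ℚ) ∈ Dom n := domNat K (by omega)
            have hA'' : ¬ExcPairA ℓ ((K : ℕ) : ℚ) := by
              rintro (⟨_, h⟩ | ⟨_, h⟩)
              · exact natNe32 K h
              · have : K = 1 := by exact_mod_cast h
                omega
            have hB'' : ¬ExcPairB n ℓ ((K : ℕ) : ℚ) := by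
              rintro (⟨_, h⟩ | ⟨_, h⟩)
              · exact natNeN32 K h
              · have h2 : K + 2 = n := by
                  have : ((K + 2 : ℕ) : ℚ) = (n : ℚ) := by push_cast; linarith
                  exact_mod_cast this
                omega
            have hrec := hPrec2 ℓ hℓ _ (Or.inr (Or.inl ⟨k, rfl⟩)) hlt hA hB hπt
            rw [hrec, harg]
            have hle' : ((K : ℕ) : ℚ) ≤ (N : ℚ) := by
              rw [hcastK]; push_cast at hle; linarith
            have h0 := IH ℓ hℓ _ hmem' hle' hA'' hB''
            have h1 := pge 2 3 adj23
            linarith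
        · -- t = n - 3/2 + (2n-6) k
          have hπt := hgn k
          set K := n - 3 + (2 * n - 6) * k with hK
          have hKprod : (2 * n - 6) * k = 0 ∨ 2 * n - 6 ≤ (2 * n - 6) * k := by
            rcases Nat.eq_zero_or_pos k with rfl | hk
            · left; simp
            · right; exact Nat.le_mul_of_pos_right _ hk
          have hcastK : ((K : ℕ) : ℚ) = (n : ℚ) - 3 + (2 * (n : ℚ) - 6) * (k : ℚ) := by
            rw [hK, Nat.cast_add, Nat.cast_mul, castDelta n hn, Nat.cast_sub (by omega)]
            norm_num
          have harg : (n : ℚ) - 3 / 2 + (2 * (n : ℚ) - 6) * (k : ℚ) - 3 / 2 = (K : ℚ) := by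
            rw [hcastK]; ring
          have hmem' : ((K : ℕ) : ℚ) ∈ Dom n := domNat K (by omega)
          have hA'' : ¬ExcPairA ℓ ((K : ℕ) : ℚ) := by
            rintro (⟨_, h⟩ | ⟨_, h⟩)
            · exact natNe32 K h
            · have : K = 1 := by exact_mod_cast h
              omega
          have hB'' : ¬ExcPairB n ℓ ((K : ℕ) : ℚ) := by
            rintro (⟨_, h⟩ | ⟨_, h⟩)
            · exact natNeN32 K h
            · have h2 : K + 2 = n := by
                have : ((K + 2 : ℕ) : ℚ) = (n : ℚ) := by push_cast; linarith
                exact_mod_cast this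
              omega
          have hrec := hPrecn ℓ hℓ _ (Or.inr (Or.inr ⟨k, rfl⟩)) hlt hA hB hπt
          rw [hrec, harg]
          have hle' : ((K : ℕ) : ℚ) ≤ (N : ℚ) := by
            rw [hcastK]; push_cast at hle; linarith
          have h0 := IH ℓ hℓ _ hmem' hle' hA'' hB''
          have h1 := pge n (n - 2) adjnn2
          linarith
  -- CONCLUSION
  intro ℓ hℓ t ht
  constructor
  · exact fun hA hB => key ⌈t⌉₊ ℓ hℓ t ht (Nat.le_ceil t) hA hB
  · rintro (hA | hB)
    · rw [hPexcA ℓ hℓ t ht hA]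
      rcases hA with ⟨h1, h2⟩ | ⟨h1, h2⟩
      · rw [h1, h2, hπ1, hπ32]
        have := pge 3 1 adj31; have := ple 3 2 adj32; linarith
      · rw [h1, h2, hπ1, hπ32]
        have := pge 3 2 adj32; have := ple 3 1 adj31; linarith
    · rw [hPexcB ℓ hℓ t ht hB]
      rcases hB with ⟨h1, h2⟩ | ⟨h1, h2⟩
      · rw [h1, h2, hπn2, hπn]
        have := pge (n - 2) (n - 1) adjn2n1; have := ple (n - 2) n adjn2n; linarith
      · rw [h1, h2, hπn2, hπn]
        have := pge (n - 2) n adjn2n; have := ple (n - 2) (n - 1) adjn2n1; linarith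

end
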